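/- Let X, Θ, Y be separable real Hilbert spaces, U = X × Θ with norm ‖(x,θ)‖_U² = ‖x‖_X² + ‖θ‖_Θ², and F : U → Y Lipschitz with constant L. Let E : U → Y be Lipschitz with constant at most R with ‖E(0)‖_Y ≤ B. For Borel probability measures ν, ν' on U with finite second moments, the risk-shift bound is symmetric in the following sense: |R_{ν'}(E) − R_ν(E)| ≤ c(ν,ν') · W₂(ν,ν'), where R_ν(E) = ∫ ‖F(u) − E(u)‖_Y² dν(u), W₂ is the 2-Wasserstein distance on U, and c(ν,ν') = C₁² √(2(∫‖u‖_U² dν + ∫‖u‖_U² dν')) + 2C₁C₂ with C₁ = L + R and C₂ = ‖F(0)‖_Y + B. -/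

import Mathlib

/-!
Put `G = F - E`. It is `(L + R)`-Lipschitz for the product Hilbert norm and grows at most like
`‖G u‖ ≤ C₁ ‖u‖_U + C₂`. Along any coupling `γ` of `ν` and `ν'` the difference of risks is
`∫ (‖G v‖² - ‖G u‖²) dγ`, and
`|‖G v‖² - ‖G u‖²| ≤ ‖G v - G u‖ (‖G u‖ + ‖G v‖) ≤ C₁ ‖u - v‖_U (C₁ (‖u‖_U + ‖v‖_U) + 2 C₂)`.
Cauchy–Schwarz in `L²(γ)` together with `(a + b)² ≤ 2a² + 2b²` bounds the integral by
`c(ν,ν') (∫ ‖u - v‖_U² dγ)^{1/2}`; taking the infimum over couplings gives the bound with `W₂`.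
-/

open MeasureTheory
open scoped ENNReal NNReal

noncomputable section

/-- The Hilbert norm on the product `U = X × Θ`: `‖(x, θ)‖_U = √(‖x‖² + ‖θ‖²)`. -/
def nU {X Θ : Type*} [NormedAddCommGroup X] [NormedAddCommGroup Θ] (u : X × Θ) : ℝ :=
  Real.sqrt (‖u.1‖ ^ 2 + ‖u.2‖ ^ 2)

/-- The 2-Wasserstein distance associated with a cost function `d`: the infimum over all
couplings `γ` of `μ` and `μ'` (i.e. probability measures on the product whose marginals are
`μ` and `μ'`) of `(∫ d(u,v)² dγ)^{1/2}`. -/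
def W2 {α : Type*} [MeasurableSpace α] (d : α → α → ℝ) (μ μ' : Measure α) : ℝ :=
  sInf { r : ℝ | ∃ γ : Measure (α × α), IsProbabilityMeasure γ ∧
      γ.map Prod.fst = μ ∧ γ.map Prod.snd = μ' ∧
      r = Real.sqrt (∫ p, d p.1 p.2 ^ 2 ∂γ) }

/-- The squared-error risk `R_ν(E) = ∫ ‖F(u) - E(u)‖² dν(u)`. -/
def risk {X Θ Y : Type*} [NormedAddCommGroup X] [NormedAddCommGroup Θ] [NormedAddCommGroup Y]
    [MeasurableSpace X] [MeasurableSpace Θ] (F E : X × Θ → Y) (ν : Measure (X × Θ)) : ℝ :=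
  ∫ u, ‖F u - E u‖ ^ 2 ∂ν

/-- The hypothesis class `H`: all maps `E : U → Y` that are Lipschitz with constant at most
`R₀` (with respect to the Hilbert product norm on `U`) and satisfy `‖E 0‖ ≤ B`. -/
def Hclass {X Θ Y : Type*} [NormedAddCommGroup X] [NormedAddCommGroup Θ] [NormedAddCommGroup Y]
    (R₀ B : ℝ) : Set (X × Θ → Y) :=
  { E | (∀ u v, ‖E u - E v‖ ≤ R₀ * nU (u - v)) ∧ ‖E 0‖ ≤ B }

/-- The constant `c(ν,ν') = C₁² √(2(∫‖u‖_U² dν + ∫‖u‖_U² dν')) + 2 C₁ C₂`, where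
`C₁ = L + R₀` and `C₂ = ‖F 0‖ + B`. -/
def cShift {X Θ Y : Type*} [NormedAddCommGroup X] [NormedAddCommGroup Θ] [NormedAddCommGroup Y]
    [MeasurableSpace X] [MeasurableSpace Θ] (L R₀ B : ℝ) (F : X × Θ → Y)
    (ν ν' : Measure (X × Θ)) : ℝ :=
  (L + R₀) ^ 2 * Real.sqrt (2 * ((∫ u, nU u ^ 2 ∂ν) + ∫ u, nU u ^ 2 ∂ν'))
    + 2 * (L + R₀) * (‖F 0‖ + B)

/-- The bound objective `J(ν) = inf_{E ∈ H} R_ν(E) + c(ν, ν_dep) W₂(ν, ν_dep)`, where the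
Wasserstein distance on `U = X × Θ` is taken with respect to the Hilbert product norm. -/
def Jobj {X Θ Y : Type*} [NormedAddCommGroup X] [NormedAddCommGroup Θ] [NormedAddCommGroup Y]
    [MeasurableSpace X] [MeasurableSpace Θ] (L R₀ B : ℝ) (F : X × Θ → Y)
    (νdep ν : Measure (X × Θ)) : ℝ :=
  sInf ((fun E => risk F E ν) '' Hclass R₀ B)
    + cShift L R₀ B F ν νdep * W2 (fun u v => nU (u - v)) ν νdep

section ProductNorm

variable {X Θ : Type*} [NormedAddCommGroup X] [NormedAddCommGroup Θ]

lemma nU_eq_norm_toLp (u : X × Θ) : nU u = ‖WithLp.toLp 2 u‖ :=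
  (WithLp.prod_norm_eq_of_L2 _).symm

lemma nU_nonneg (u : X × Θ) : 0 ≤ nU u := Real.sqrt_nonneg _

lemma nU_sub_le (u v : X × Θ) : nU (u - v) ≤ nU u + nU v := by
  simpa only [nU_eq_norm_toLp, WithLp.toLp_sub] using norm_sub_le _ _

lemma nU_pos {u : X × Θ} (hu : u ≠ 0) : 0 < nU u := by
  rw [nU_eq_norm_toLp, norm_pos_iff]
  exact fun h => hu (by simpa using congrArg WithLp.ofLp h)

@[fun_prop]
lemma continuous_nU : Continuous (nU : X × Θ → ℝ) := by
  unfold nU; fun_prop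

variable {Y : Type*} [NormedAddCommGroup Y] {G : X × Θ → Y} {K C : ℝ}

lemma continuous_of_norm_sub_le_mul_nU (hG : ∀ u v, ‖G u - G v‖ ≤ K * nU (u - v)) :
    Continuous G := by
  refine continuous_iff_continuousAt.2 fun u => tendsto_iff_norm_sub_tendsto_zero.2 ?_
  refine squeeze_zero (fun _ => norm_nonneg _) (fun v => hG v u) ?_
  have h : Continuous fun v => K * nU (v - u) := by fun_prop
  simpa [nU] using h.tendsto u

lemma nonneg_of_norm_sub_le_mul_nU [Nontrivial (X × Θ)]
    (hG : ∀ u v, ‖G u - G v‖ ≤ K * nU (u - v)) : 0 ≤ K := by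
  obtain ⟨u, v, huv⟩ := exists_pair_ne (X × Θ)
  exact nonneg_of_mul_nonneg_left ((norm_nonneg _).trans (hG u v)) (nU_pos (sub_ne_zero.2 huv))

lemma norm_le_mul_nU_add (hG : ∀ u v, ‖G u - G v‖ ≤ K * nU (u - v)) (hG0 : ‖G 0‖ ≤ C)
    (u : X × Θ) : ‖G u‖ ≤ K * nU u + C := by
  have h := hG u 0
  rw [sub_zero] at h
  linarith [norm_le_norm_sub_add (G u) (G 0)]

lemma abs_norm_sq_sub_norm_sq_le_of_norm_sub_le (hG : ∀ u v, ‖G u - G v‖ ≤ K * nU (u - v))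
    (hG0 : ‖G 0‖ ≤ C) (u v : X × Θ) :
    |‖G v‖ ^ 2 - ‖G u‖ ^ 2| ≤ K ^ 2 * (nU (u - v) * (nU u + nU v)) + 2 * K * C * nU (u - v) := by
  have hvu : ‖G v - G u‖ ≤ K * nU (u - v) := norm_sub_rev (G u) (G v) ▸ hG u v
  have hsum : ‖G v‖ + ‖G u‖ ≤ K * (nU u + nU v) + 2 * C := by
    linarith [norm_le_mul_nU_add hG hG0 u, norm_le_mul_nU_add hG hG0 v]
  calc |‖G v‖ ^ 2 - ‖G u‖ ^ 2| = |‖G v‖ - ‖G u‖| * (‖G v‖ + ‖G u‖) := by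
        rw [sq_sub_sq, abs_mul, abs_of_nonneg (by positivity : 0 ≤ ‖G v‖ + ‖G u‖), mul_comm]
    _ ≤ K * nU (u - v) * (K * (nU u + nU v) + 2 * C) :=
        mul_le_mul ((abs_norm_sub_norm_le _ _).trans hvu) hsum (by positivity)
          ((norm_nonneg _).trans hvu)
    _ = K ^ 2 * (nU (u - v) * (nU u + nU v)) + 2 * K * C * nU (u - v) := by ring

end ProductNorm

lemma le_mul_csInf_of_forall_le_mul {S : Set ℝ} (hne : S.Nonempty) (hbdd : BddBelow S) {a c : ℝ}
    (h : ∀ r ∈ S, a ≤ c * r) : a ≤ c * sInf S := by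
  rcases le_or_gt c 0 with hc | hc
  · obtain ⟨r, hr⟩ := hne
    exact (h r hr).trans (mul_le_mul_of_nonpos_left (csInf_le hbdd hr) hc)
  · rw [← div_le_iff₀' hc]
    exact le_csInf hne fun r hr => (div_le_iff₀' hc).2 (h r hr)

lemma le_mul_W2_of_forall_coupling {α : Type*} [MeasurableSpace α] {d : α → α → ℝ}
    {μ μ' : Measure α} [IsProbabilityMeasure μ] [IsProbabilityMeasure μ'] {a c : ℝ}
    (h : ∀ γ : Measure (α × α), IsProbabilityMeasure γ → γ.map Prod.fst = μ →
      γ.map Prod.snd = μ' → a ≤ c * √(∫ p, d p.1 p.2 ^ 2 ∂γ)) :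
    a ≤ c * W2 d μ μ' := by
  refine le_mul_csInf_of_forall_le_mul ?_ ⟨0, ?_⟩ ?_
  · exact ⟨_, μ.prod μ', inferInstance, by simp, by simp, rfl⟩
  · rintro r ⟨γ, -, -, -, rfl⟩
    exact Real.sqrt_nonneg _
  · rintro r ⟨γ, hγ, hγ₁, hγ₂, rfl⟩
    exact h γ hγ hγ₁ hγ₂

lemma integral_mul_le_sqrt_mul_sqrt {α : Type*} [MeasurableSpace α] {μ : Measure α}
    {f g : α → ℝ} (hf₀ : 0 ≤ᵐ[μ] f) (hg₀ : 0 ≤ᵐ[μ] g) (hf : MemLp f 2 μ) (hg : MemLp g 2 μ) :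
    ∫ a, f a * g a ∂μ ≤ √(∫ a, f a ^ 2 ∂μ) * √(∫ a, g a ^ 2 ∂μ) := by
  have h := integral_mul_le_Lp_mul_Lq_of_nonneg Real.HolderConjugate.two_two hf₀ hg₀
    (by simpa using hf) (by simpa using hg)
  simpa only [Real.rpow_two, ← Real.sqrt_eq_rpow] using h

section Marginals

variable {α V : Type*} [MeasurableSpace α] [NormedAddCommGroup V]
  {μ μ' : Measure α} {γ : Measure (α × α)} {f : α → V}

lemma integral_comp_fst_of_map_fst_eq [NormedSpace ℝ V] (hγ : γ.map Prod.fst = μ)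
    (hf : AEStronglyMeasurable f μ) : ∫ p, f p.1 ∂γ = ∫ u, f u ∂μ := by
  subst hγ
  exact (integral_map measurable_fst.aemeasurable hf).symm

lemma integral_comp_snd_of_map_snd_eq [NormedSpace ℝ V] (hγ : γ.map Prod.snd = μ)
    (hf : AEStronglyMeasurable f μ) : ∫ p, f p.2 ∂γ = ∫ u, f u ∂μ := by
  subst hγ
  exact (integral_map measurable_snd.aemeasurable hf).symm

lemma integral_sub_integral_eq_of_map_eq [NormedSpace ℝ V] (hγ₁ : γ.map Prod.fst = μ)
    (hγ₂ : γ.map Prod.snd = μ') (hf : Integrable f μ) (hf' : Integrable f μ') :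
    ∫ u, f u ∂μ' - ∫ u, f u ∂μ = ∫ p, (f p.2 - f p.1) ∂γ := by
  subst hγ₁ hγ₂
  rw [integral_map measurable_snd.aemeasurable hf'.1, integral_map measurable_fst.aemeasurable hf.1]
  exact (integral_sub (hf'.comp_measurable measurable_snd) (hf.comp_measurable measurable_fst)).symm

lemma MeasureTheory.MemLp.comp_fst_of_map_fst_eq {p : ℝ≥0∞} (hγ : γ.map Prod.fst = μ)
    (hf : MemLp f p μ) : MemLp (fun q => f q.1) p γ := by
  subst hγ
  exact hf.comp_of_map measurable_fst.aemeasurable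

lemma MeasureTheory.MemLp.comp_snd_of_map_snd_eq {p : ℝ≥0∞} (hγ : γ.map Prod.snd = μ)
    (hf : MemLp f p μ) : MemLp (fun q => f q.2) p γ := by
  subst hγ
  exact hf.comp_of_map measurable_snd.aemeasurable

end Marginals

lemma memLp_two_nU_sub {X Θ : Type*} [NormedAddCommGroup X] [MeasurableSpace X]
    [NormedAddCommGroup Θ] [MeasurableSpace Θ] [OpensMeasurableSpace ((X × Θ) × (X × Θ))]
    {γ : Measure ((X × Θ) × (X × Θ))}
    (h : MemLp (fun p : (X × Θ) × (X × Θ) => nU p.1 + nU p.2) 2 γ) :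
    MemLp (fun p : (X × Θ) × (X × Θ) => nU (p.1 - p.2)) 2 γ := by
  refine h.of_le (by fun_prop : Continuous _).aestronglyMeasurable (ae_of_all _ fun p => ?_)
  rw [Real.norm_of_nonneg (nU_nonneg _),
    Real.norm_of_nonneg (add_nonneg (nU_nonneg _) (nU_nonneg _))]
  exact nU_sub_le _ _

section Coupling

variable {X Θ Y : Type*}
  [NormedAddCommGroup X] [MeasurableSpace X] [NormedAddCommGroup Θ] [MeasurableSpace Θ]
  [OpensMeasurableSpace (X × Θ)] [NormedAddCommGroup Y]
  {μ μ' : Measure (X × Θ)} {γ : Measure ((X × Θ) × (X × Θ))}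

lemma memLp_two_nU (hμ : Integrable (fun u => nU u ^ 2) μ) : MemLp nU 2 μ :=
  (memLp_two_iff_integrable_sq continuous_nU.aestronglyMeasurable).2 hμ

lemma memLp_two_nU_add_of_map_eq (hγ₁ : γ.map Prod.fst = μ) (hγ₂ : γ.map Prod.snd = μ')
    (hμ : Integrable (fun u => nU u ^ 2) μ) (hμ' : Integrable (fun u => nU u ^ 2) μ') :
    MemLp (fun p : (X × Θ) × (X × Θ) => nU p.1 + nU p.2) 2 γ :=
  ((memLp_two_nU hμ).comp_fst_of_map_fst_eq hγ₁).add
    ((memLp_two_nU hμ').comp_snd_of_map_snd_eq hγ₂)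

lemma integral_nU_add_sq_le (hγ₁ : γ.map Prod.fst = μ) (hγ₂ : γ.map Prod.snd = μ')
    (hμ : Integrable (fun u => nU u ^ 2) μ) (hμ' : Integrable (fun u => nU u ^ 2) μ') :
    ∫ p, (nU p.1 + nU p.2) ^ 2 ∂γ ≤ 2 * (∫ u, nU u ^ 2 ∂μ + ∫ u, nU u ^ 2 ∂μ') := by
  have h₁ := ((memLp_two_nU hμ).comp_fst_of_map_fst_eq hγ₁).integrable_sq
  have h₂ := ((memLp_two_nU hμ').comp_snd_of_map_snd_eq hγ₂).integrable_sq
  have hsq {ρ : Measure (X × Θ)} : AEStronglyMeasurable (fun u => nU u ^ 2) ρ :=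
    (continuous_nU.pow 2).aestronglyMeasurable
  calc ∫ p, (nU p.1 + nU p.2) ^ 2 ∂γ ≤ ∫ p, (2 * nU p.1 ^ 2 + 2 * nU p.2 ^ 2) ∂γ :=
        integral_mono_of_nonneg (ae_of_all _ fun _ => by positivity)
          ((h₁.const_mul 2).add (h₂.const_mul 2))
          (ae_of_all _ fun p => by nlinarith [sq_nonneg (nU p.1 - nU p.2)])
    _ = 2 * (∫ u, nU u ^ 2 ∂μ + ∫ u, nU u ^ 2 ∂μ') := by
        rw [integral_add (h₁.const_mul 2) (h₂.const_mul 2), integral_const_mul, integral_const_mul,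
          integral_comp_fst_of_map_fst_eq (f := fun u => nU u ^ 2) hγ₁ hsq,
          integral_comp_snd_of_map_snd_eq (f := fun u => nU u ^ 2) hγ₂ hsq]
        ring

lemma integral_nU_sub_mul_nU_add_le [OpensMeasurableSpace ((X × Θ) × (X × Θ))]
    (hγ₁ : γ.map Prod.fst = μ) (hγ₂ : γ.map Prod.snd = μ')
    (hμ : Integrable (fun u => nU u ^ 2) μ) (hμ' : Integrable (fun u => nU u ^ 2) μ') :
    ∫ p, nU (p.1 - p.2) * (nU p.1 + nU p.2) ∂γ ≤
      √(∫ p, nU (p.1 - p.2) ^ 2 ∂γ) * √(2 * (∫ u, nU u ^ 2 ∂μ + ∫ u, nU u ^ 2 ∂μ')) := by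
  have hs := memLp_two_nU_add_of_map_eq hγ₁ hγ₂ hμ hμ'
  refine (integral_mul_le_sqrt_mul_sqrt (ae_of_all _ fun _ => nU_nonneg _)
    (ae_of_all _ fun _ => add_nonneg (nU_nonneg _) (nU_nonneg _)) (memLp_two_nU_sub hs) hs).trans ?_
  gcongr
  exact integral_nU_add_sq_le hγ₁ hγ₂ hμ hμ'

lemma memLp_two_norm_of_norm_sub_le [IsFiniteMeasure μ] {G : X × Θ → Y} {K C : ℝ}
    (hG : ∀ u v, ‖G u - G v‖ ≤ K * nU (u - v)) (hG0 : ‖G 0‖ ≤ C)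
    (hμ : Integrable (fun u => nU u ^ 2) μ) : MemLp (fun u => ‖G u‖) 2 μ := by
  refine (((memLp_two_nU hμ).const_mul K).add (memLp_const C)).of_le
    (continuous_of_norm_sub_le_mul_nU hG).norm.aestronglyMeasurable (ae_of_all _ fun u => ?_)
  rw [norm_norm]
  exact (norm_le_mul_nU_add hG hG0 u).trans (Real.le_norm_self _)

lemma abs_integral_norm_sq_sub_le_of_coupling [OpensMeasurableSpace ((X × Θ) × (X × Θ))]
    [IsProbabilityMeasure μ] [IsProbabilityMeasure μ'] [IsProbabilityMeasure γ]
    {G : X × Θ → Y} {K C : ℝ} (hK : 0 ≤ K)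
    (hG : ∀ u v, ‖G u - G v‖ ≤ K * nU (u - v)) (hG0 : ‖G 0‖ ≤ C)
    (hγ₁ : γ.map Prod.fst = μ) (hγ₂ : γ.map Prod.snd = μ')
    (hμ : Integrable (fun u => nU u ^ 2) μ) (hμ' : Integrable (fun u => nU u ^ 2) μ') :
    |∫ u, ‖G u‖ ^ 2 ∂μ' - ∫ u, ‖G u‖ ^ 2 ∂μ| ≤
      (K ^ 2 * √(2 * (∫ u, nU u ^ 2 ∂μ + ∫ u, nU u ^ 2 ∂μ')) + 2 * K * C) *
        √(∫ p, nU (p.1 - p.2) ^ 2 ∂γ) := by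
  have hC : 0 ≤ C := (norm_nonneg _).trans hG0
  have hs := memLp_two_nU_add_of_map_eq hγ₁ hγ₂ hμ hμ'
  have hd := memLp_two_nU_sub hs
  have hds : Integrable (fun p => nU (p.1 - p.2) * (nU p.1 + nU p.2)) γ := hd.integrable_mul hs
  have hΔ := integral_sub_integral_eq_of_map_eq hγ₁ hγ₂
    (memLp_two_norm_of_norm_sub_le hG hG0 hμ).integrable_sq
    (memLp_two_norm_of_norm_sub_le hG hG0 hμ').integrable_sq
  have hd_le : ∫ p, nU (p.1 - p.2) ∂γ ≤ √(∫ p, nU (p.1 - p.2) ^ 2 ∂γ) := by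
    simpa using integral_mul_le_sqrt_mul_sqrt (ae_of_all _ fun _ => nU_nonneg _)
      (ae_of_all _ fun _ => zero_le_one) hd (memLp_const 1)
  calc |∫ u, ‖G u‖ ^ 2 ∂μ' - ∫ u, ‖G u‖ ^ 2 ∂μ|
      = |∫ p, (‖G p.2‖ ^ 2 - ‖G p.1‖ ^ 2) ∂γ| := by rw [hΔ]
    _ ≤ ∫ p, |‖G p.2‖ ^ 2 - ‖G p.1‖ ^ 2| ∂γ := abs_integral_le_integral_abs
    _ ≤ ∫ p, (K ^ 2 * (nU (p.1 - p.2) * (nU p.1 + nU p.2)) + 2 * K * C * nU (p.1 - p.2)) ∂γ :=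
        integral_mono_of_nonneg (ae_of_all _ fun _ => abs_nonneg _)
          ((hds.const_mul _).add ((hd.integrable one_le_two).const_mul _))
          (ae_of_all _ fun p => abs_norm_sq_sub_norm_sq_le_of_norm_sub_le hG hG0 p.1 p.2)
    _ = K ^ 2 * ∫ p, nU (p.1 - p.2) * (nU p.1 + nU p.2) ∂γ
          + 2 * K * C * ∫ p, nU (p.1 - p.2) ∂γ := by
        rw [integral_add (hds.const_mul _)
          ((hd.integrable one_le_two).const_mul _), integral_const_mul, integral_const_mul]
    _ ≤ K ^ 2 * (√(∫ p, nU (p.1 - p.2) ^ 2 ∂γ) * √(2 * (∫ u, nU u ^ 2 ∂μ + ∫ u, nU u ^ 2 ∂μ')))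
          + 2 * K * C * √(∫ p, nU (p.1 - p.2) ^ 2 ∂γ) := by
        gcongr
        exact integral_nU_sub_mul_nU_add_le hγ₁ hγ₂ hμ hμ'
    _ = (K ^ 2 * √(2 * (∫ u, nU u ^ 2 ∂μ + ∫ u, nU u ^ 2 ∂μ')) + 2 * K * C) *
          √(∫ p, nU (p.1 - p.2) ^ 2 ∂γ) := by ring

end Coupling

variable {X Θ Y : Type*}
  [NormedAddCommGroup X] [InnerProductSpace ℝ X] [CompleteSpace X]
  [SecondCountableTopology X] [MeasurableSpace X] [BorelSpace X]
  [NormedAddCommGroup Θ] [InnerProductSpace ℝ Θ] [CompleteSpace Θ]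
  [SecondCountableTopology Θ] [MeasurableSpace Θ] [BorelSpace Θ]
  [NormedAddCommGroup Y] [InnerProductSpace ℝ Y] [CompleteSpace Y]
  [SecondCountableTopology Y]

/-- **symmetric risk-shift bound.**
`|R_{ν'}(E) − R_ν(E)| ≤ c(ν,ν') · W₂(ν,ν')`. -/
theorem risk_shift_symm (F E : X × Θ → Y) (L R B : ℝ)
    (hF : ∀ u v : X × Θ, ‖F u - F v‖ ≤ L * nU (u - v))
    (hE : ∀ u v : X × Θ, ‖E u - E v‖ ≤ R * nU (u - v))
    (hE0 : ‖E 0‖ ≤ B)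
    (ν ν' : Measure (X × Θ)) [IsProbabilityMeasure ν] [IsProbabilityMeasure ν']
    (hν : Integrable (fun u => nU u ^ 2) ν) (hν' : Integrable (fun u => nU u ^ 2) ν') :
    |risk F E ν' - risk F E ν|
      ≤ cShift L R B F ν ν' * W2 (fun u v => nU (u - v)) ν ν' := by
  refine le_mul_W2_of_forall_coupling fun γ _ hγ₁ hγ₂ => ?_
  rcases subsingleton_or_nontrivial (X × Θ) with hU | hU
  · -- on a one-point space `L + R` may be negative, but both sides vanish there
    simp [risk, nU, Subsingleton.elim _ (0 : X × Θ)]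
  have hG : ∀ u v, ‖(F - E) u - (F - E) v‖ ≤ (L + R) * nU (u - v) := fun u v =>
    calc ‖(F - E) u - (F - E) v‖ = ‖(F u - F v) - (E u - E v)‖ := by
          rw [Pi.sub_apply, Pi.sub_apply, sub_sub_sub_comm]
      _ ≤ L * nU (u - v) + R * nU (u - v) := (norm_sub_le _ _).trans (add_le_add (hF u v) (hE u v))
      _ = (L + R) * nU (u - v) := by ring
  have hG0 : ‖(F - E) 0‖ ≤ ‖F 0‖ + B := (norm_sub_le _ _).trans (by gcongr)
  exact abs_integral_norm_sq_sub_le_of_coupling (nonneg_of_norm_sub_le_mul_nU hG) hG hG0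
    hγ₁ hγ₂ hν hν'
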